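/- Let G be a finite group acting on a finite nonempty type ι, acting on R = ℤ[xᵢ : i ∈ ι] by ring automorphisms permuting the variables, and let J ⊆ R be a G-stable ideal. Then the cokernel of the restriction R^G → (R/J)^G of the quotient map to invariant subrings is isomorphic, as an abelian group, to the first group cohomology H¹(G, J), where J is regarded as a G-module via the restricted action. -/

import Mathlib

set_option synthInstance.maxHeartbeats 1000000
set_option maxHeartbeats 1000000

open MvPolynomial

/-- The subring of `G`-invariant elements of a ring `R` on which `G` acts by
ring automorphisms. -/
def fixedSubring (G R : Type) [Monoid G] [Ring R] [MulSemiringAction G R] :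
    Subring R where
  carrier := {r | ∀ g : G, g • r = r}
  zero_mem' := fun g => smul_zero g
  one_mem' := fun g => smul_one g
  add_mem' := fun {a b} ha hb g => by rw [smul_add, ha g, hb g]
  mul_mem' := fun {a b} ha hb g => by rw [smul_mul', ha g, hb g]
  neg_mem' := fun {a} ha g => by rw [smul_neg, ha g]

lemma mem_fixedSubring {G R : Type} [Monoid G] [Ring R] [MulSemiringAction G R]
    {r : R} : r ∈ fixedSubring G R ↔ ∀ g : G, g • r = r := Iff.rfl

/-- The restriction, to invariant subrings, of the quotient map `R → R ⧸ J` by a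
`G`-stable ideal `J` (the action on the quotient being the induced one). -/
def resHom (G R : Type) [Group G] [CommRing R] [MulSemiringAction G R] (J : Ideal R)
    [MulSemiringAction G (R ⧸ J)]
    (hq : ∀ (g : G) (r : R),
      g • (Ideal.Quotient.mk J r) = Ideal.Quotient.mk J (g • r)) :
    fixedSubring G R →+* fixedSubring G (R ⧸ J) where
  toFun p := ⟨Ideal.Quotient.mk J (p : R), fun g => by
    rw [hq]
    exact congrArg (Ideal.Quotient.mk J) (mem_fixedSubring.mp p.2 g)⟩
  map_one' := Subtype.ext (map_one (Ideal.Quotient.mk J))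
  map_mul' x y := Subtype.ext (map_mul (Ideal.Quotient.mk J) _ _)
  map_zero' := Subtype.ext (map_zero (Ideal.Quotient.mk J))
  map_add' x y := Subtype.ext (map_add (Ideal.Quotient.mk J) _ _)

/-- The action of `G` on a `G`-stable ideal `J` of `R`, restricted from the action
on `R`. -/
def idealAction (G : Type) {R : Type} [Group G] [CommRing R] [MulSemiringAction G R]
    (J : Ideal R) (hJ : ∀ (g : G), ∀ x ∈ J, g • x ∈ J) :
    DistribMulAction G J where
  smul g x := ⟨g • (x : R), hJ g x x.2⟩
  one_smul x := Subtype.ext (one_smul G (x : R))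
  mul_smul g h x := Subtype.ext (mul_smul g h (x : R))
  smul_zero g := Subtype.ext (smul_zero g)
  smul_add g x y := Subtype.ext (smul_add g (x : R) (y : R))

/-- A `G`-stable ideal `J` of `R`, regarded as a `ℤ`-linear `G`-representation via the
restricted action. -/
noncomputable def idealRep (G : Type) {R : Type} [Group G] [CommRing R]
    [MulSemiringAction G R] (J : Ideal R)
    (hJ : ∀ (g : G), ∀ x ∈ J, g • x ∈ J) : Rep ℤ G :=
  letI : DistribMulAction G J := idealAction G J hJ
  Rep.ofDistribMulAction ℤ G J

/-! The long exact sequence of `0 → J → R → R/J → 0` identifies the cokernel of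
`R^G → (R/J)^G` with the kernel of `H¹(G, J) → H¹(G, R)`, so it suffices that `H¹(G, R) = 0`.
Coefficientwise, a 1-cocycle of `R = ℤ[X]` is a cocycle of `ℤ`-valued functions on the
monomials, which `G` permutes; such a cocycle vanishes on stabilizers, and is then the
coboundary of a function defined orbit by orbit. -/

section PermutationCocycle

variable {G D : Type*} [Group G] [MulAction G D] {ψ : G → D → ℤ}

lemma cocycle_one_apply (hψ : ∀ g h m, ψ (g * h) m = ψ h (g⁻¹ • m) + ψ g m) (m : D) :
    ψ 1 m = 0 := by
  simpa using hψ 1 1 m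

lemma cocycle_pow_apply (hψ : ∀ g h m, ψ (g * h) m = ψ h (g⁻¹ • m) + ψ g m)
    {g : G} {m : D} (hgm : g • m = m) (n : ℕ) : ψ (g ^ n) m = n * ψ g m := by
  induction n with
  | zero => simp [cocycle_one_apply hψ]
  | succ n ih =>
    rw [pow_succ', hψ, inv_smul_eq_iff.2 hgm.symm, ih]
    push_cast
    ring

/-- On the stabilizer of `m`, `g ↦ ψ g m` is a homomorphism to `ℤ`, hence trivial. -/
lemma cocycle_apply_eq_zero_of_smul_eq [Finite G]
    (hψ : ∀ g h m, ψ (g * h) m = ψ h (g⁻¹ • m) + ψ g m) {g : G} {m : D} (hgm : g • m = m) :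
    ψ g m = 0 := by
  have h := cocycle_pow_apply hψ hgm (orderOf g)
  rw [pow_orderOf_eq_one, cocycle_one_apply hψ, eq_comm, mul_eq_zero] at h
  exact h.resolve_left (Nat.cast_ne_zero.2 (isOfFinOrder_of_finite g).orderOf_pos.ne')

/-- Take `ρ m = -ψ a m`, where `a • m₀ = m` for a fixed representative `m₀` of
the orbit of `m`; it is independent of `a` by the stabilizer vanishing. -/
theorem exists_eq_coboundary_of_cocycle [Finite G]
    (hψ : ∀ g h m, ψ (g * h) m = ψ h (g⁻¹ • m) + ψ g m) :
    ∃ ρ : D → ℤ, (∀ m, (∀ g, ψ g m = 0) → ρ m = 0) ∧ ∀ g m, ψ g m = ρ (g⁻¹ • m) - ρ m := by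
  let rep : D → D := fun m => (⟦m⟧ : MulAction.orbitRel.Quotient G D).out
  have rep_inv_smul (g : G) (m : D) : rep (g⁻¹ • m) = rep m := by
    simp only [rep, MulAction.orbitRel.Quotient.quotient_smul_eq]
  have mem_orbit_rep (m : D) : m ∈ MulAction.orbit G (rep m) :=
    MulAction.orbitRel_apply.1 (Quotient.exact (Quotient.out_eq _).symm)
  choose σ hσ using fun m => MulAction.mem_orbit_iff.1 (mem_orbit_rep m)
  refine ⟨fun m => -ψ (σ m) m, fun m hm => by simp [hm], fun g m => ?_⟩
  have hb : σ (g⁻¹ • m) • rep m = g⁻¹ • m := by rw [← rep_inv_smul g]; exact hσ _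
  have hfix : ((σ m)⁻¹ * (g * σ (g⁻¹ • m))) • rep m = rep m := by
    rw [mul_smul, mul_smul, hb, smul_inv_smul, inv_smul_eq_iff, hσ]
  have e1 := hψ g (σ (g⁻¹ • m)) m
  have e2 := hψ (σ m) ((σ m)⁻¹ * (g * σ (g⁻¹ • m))) m
  rw [mul_inv_cancel_left, inv_smul_eq_iff.2 (hσ m).symm,
    cocycle_apply_eq_zero_of_smul_eq hψ hfix] at e2
  linarith

end PermutationCocycle

section PolynomialCocycle

variable {G ι : Type*} [Group G] [MulAction G ι] [MulSemiringAction G (MvPolynomial ι ℤ)]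

lemma smul_eq_rename_of_smul_X
    (hX : ∀ (g : G) (i : ι), g • (X i : MvPolynomial ι ℤ) = X (g • i))
    (g : G) (p : MvPolynomial ι ℤ) : g • p = rename (g • ·) p := by
  have : (MulSemiringAction.toRingHom G (MvPolynomial ι ℤ) g).toIntAlgHom = rename (g • ·) :=
    algHom_ext fun i => (hX g i).trans (rename_X _ i).symm
  exact DFunLike.congr_fun this p

lemma coeff_smul_eq_coeff_mapDomain
    (hX : ∀ (g : G) (i : ι), g • (X i : MvPolynomial ι ℤ) = X (g • i))
    (g : G) (p : MvPolynomial ι ℤ) (m : ι →₀ ℕ) :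
    coeff m (g • p) = coeff (m.mapDomain (g⁻¹ • ·)) p := by
  have hm : (m.mapDomain (g⁻¹ • ·)).mapDomain (g • ·) = m := by
    rw [← Finsupp.mapDomain_comp]
    simp only [Function.comp_def, smul_inv_smul]
    exact Finsupp.mapDomain_id
  rw [smul_eq_rename_of_smul_X hX, ← hm, coeff_rename_mapDomain _ (MulAction.injective g), hm]

theorem exists_eq_smul_sub_of_cocycle [Finite G]
    (hX : ∀ (g : G) (i : ι), g • (X i : MvPolynomial ι ℤ) = X (g • i))
    (F : G → MvPolynomial ι ℤ) (hF : ∀ g h, F (g * h) = g • F h + F g) :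
    ∃ r : MvPolynomial ι ℤ, ∀ g, F g = g • r - r := by
  let _ : MulAction G (ι →₀ ℕ) := Finsupp.comapMulAction
  obtain ⟨ρ, hρ_zero, hρ⟩ := exists_eq_coboundary_of_cocycle (ψ := fun g m => coeff m (F g))
    (fun g h m => by simp only [hF, coeff_add, coeff_smul_eq_coeff_mapDomain hX]; rfl)
  have hρ_finite : (Function.support ρ).Finite :=
    (Set.finite_iUnion fun g => (F g).support.finite_toSet).subset fun m hm => by
      by_contra hnot
      simp only [Set.mem_iUnion, Finset.mem_coe, mem_support_iff, not_exists, not_not] at hnot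
      exact hm (hρ_zero m hnot)
  refine ⟨AddMonoidAlgebra.ofCoeff (Finsupp.ofSupportFinite ρ hρ_finite), fun g => ?_⟩
  ext m
  rw [coeff_sub, coeff_smul_eq_coeff_mapDomain hX]
  exact hρ g m

end PolynomialCocycle

section Connecting

variable {G R : Type} [Group G] [CommRing R] [MulSemiringAction G R] {J : Ideal R}

variable (G J) in
def invariantsModulo : AddSubgroup R where
  carrier := {r | ∀ g : G, g • r - r ∈ J}
  zero_mem' g := by simp
  add_mem' {a b} ha hb g := by
    rw [smul_add, add_sub_add_comm]
    exact J.add_mem (ha g) (hb g)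
  neg_mem' {a} ha g := by
    rw [smul_neg, ← neg_sub']
    exact J.neg_mem (ha g)

section Quotient

variable [MulSemiringAction G (R ⧸ J)]
  (hq : ∀ (g : G) (r : R), g • (Ideal.Quotient.mk J r) = Ideal.Quotient.mk J (g • r))

def invariantsModuloToQuotient : invariantsModulo G J →+ fixedSubring G (R ⧸ J) where
  toFun r := ⟨Ideal.Quotient.mk J r, fun g => by
    rw [hq, Ideal.Quotient.eq]
    exact r.2 g⟩
  map_zero' := Subtype.ext (map_zero _)
  map_add' _ _ := Subtype.ext (map_add _ _ _)

lemma invariantsModuloToQuotient_surjective :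
    Function.Surjective (invariantsModuloToQuotient hq) := by
  intro y
  obtain ⟨r, hr⟩ := Ideal.Quotient.mk_surjective (y : R ⧸ J)
  refine ⟨⟨r, fun g => ?_⟩, Subtype.ext hr⟩
  rw [← Ideal.Quotient.eq, ← hq, hr]
  exact y.2 g

lemma invariantsModuloToQuotient_mem_range_iff (r : invariantsModulo G J) :
    invariantsModuloToQuotient hq r ∈ (resHom G R J hq).toAddMonoidHom.range ↔
      ∃ p ∈ fixedSubring G R, (r : R) - p ∈ J := by
  constructor
  · rintro ⟨p, hp⟩
    exact ⟨p, p.2, Ideal.Quotient.eq.1 (congrArg Subtype.val hp).symm⟩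
  · rintro ⟨p, hp, hrp⟩
    exact ⟨⟨p, hp⟩, Subtype.ext (Ideal.Quotient.eq.2 hrp).symm⟩

end Quotient

variable (hJ : ∀ (g : G), ∀ x ∈ J, g • x ∈ J)

def invariantsModuloToCocycles :
    invariantsModulo G J →+ groupCohomology.cocycles₁ (idealRep G J hJ) where
  toFun r := ⟨fun g => (⟨g • (r : R) - r, r.2 g⟩ : J),
    (groupCohomology.mem_cocycles₁_iff _).2 fun g h => Subtype.ext <| by
      show (g * h) • (r : R) - r = g • (h • (r : R) - r) + (g • (r : R) - r)
      rw [smul_sub, mul_smul]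
      abel⟩
  map_zero' := groupCohomology.cocycles₁_ext fun g => Subtype.ext <| by
    show g • (0 : R) - 0 = 0
    rw [smul_zero, sub_zero]
  map_add' r s := groupCohomology.cocycles₁_ext fun g => Subtype.ext <| by
    show g • ((r : R) + s) - (r + s) = (g • (r : R) - r) + (g • (s : R) - s)
    rw [smul_add]
    abel

noncomputable def connectingHom : invariantsModulo G J →+ groupCohomology.H1 (idealRep G J hJ) :=
  (groupCohomology.H1π _).hom.toAddMonoidHom.comp (invariantsModuloToCocycles hJ)

lemma connectingHom_eq_zero_iff (r : invariantsModulo G J) :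
    connectingHom hJ r = 0 ↔ ∃ p ∈ fixedSubring G R, (r : R) - p ∈ J := by
  rw [connectingHom, AddMonoidHom.comp_apply, LinearMap.toAddMonoidHom_coe,
    groupCohomology.H1π_eq_zero_iff]
  simp only [groupCohomology.coboundaries₁, LinearMap.mem_range, funext_iff,
    groupCohomology.d₀₁_hom_apply]
  constructor
  · rintro ⟨j, hj⟩
    refine ⟨r - j.val, fun g => ?_, by simpa using j.2⟩
    have hg : g • j.val - j.val = g • (r : R) - r := congrArg Subtype.val (hj g)
    rw [smul_sub]
    linear_combination -hg
  · rintro ⟨p, hp, hrp⟩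
    exact ⟨⟨r - p, hrp⟩, fun g => Subtype.ext <| by
      show g • ((r : R) - p) - (r - p) = g • (r : R) - r
      rw [smul_sub, hp g]
      abel⟩

lemma connectingHom_surjective
    (hR : ∀ F : G → R, (∀ g h, F (g * h) = g • F h + F g) → ∃ r, ∀ g, F g = g • r - r) :
    Function.Surjective (connectingHom hJ) := by
  intro v
  refine groupCohomology.H1_induction_on v fun f => ?_
  obtain ⟨r, hr⟩ := hR (fun g => (f g).val) fun g h =>
    congrArg Subtype.val ((groupCohomology.mem_cocycles₁_iff _).1 f.2 g h)
  refine ⟨⟨r, fun g => hr g ▸ (f g).2⟩, ?_⟩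
  show groupCohomology.H1π _ (invariantsModuloToCocycles hJ _) = _
  congr 1
  exact groupCohomology.cocycles₁_ext fun g => Subtype.ext (hr g).symm

end Connecting

/-- Both sides are quotients of `invariantsModulo G J` by `J + R^G`: the cokernel via the
reduction map, `H¹(G, J)` via the connecting homomorphism, which is onto because
`H¹(G, R) = 0`. -/
noncomputable def cokernelResHomEquivH1 {G R : Type} [Group G] [CommRing R]
    [MulSemiringAction G R] (J : Ideal R) (hJ : ∀ (g : G), ∀ x ∈ J, g • x ∈ J)
    [MulSemiringAction G (R ⧸ J)]
    (hq : ∀ (g : G) (r : R), g • (Ideal.Quotient.mk J r) = Ideal.Quotient.mk J (g • r))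
    (hR : ∀ F : G → R, (∀ g h, F (g * h) = g • F h + F g) → ∃ r, ∀ g, F g = g • r - r) :
    (fixedSubring G (R ⧸ J) ⧸ (resHom G R J hq).toAddMonoidHom.range) ≃+
      groupCohomology.H1 (idealRep G J hJ) :=
  let reduce := (QuotientAddGroup.mk' _).comp (invariantsModuloToQuotient hq)
  have ker_eq : reduce.ker = (connectingHom hJ).ker := by
    ext r
    rw [AddMonoidHom.mem_ker, AddMonoidHom.mem_ker, AddMonoidHom.comp_apply,
      QuotientAddGroup.mk'_apply, QuotientAddGroup.eq_zero_iff,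
      invariantsModuloToQuotient_mem_range_iff, connectingHom_eq_zero_iff]
  ((QuotientAddGroup.quotientKerEquivOfSurjective reduce
      ((QuotientAddGroup.mk'_surjective _).comp
        (invariantsModuloToQuotient_surjective hq))).symm.trans
    (QuotientAddGroup.quotientAddEquivOfEq ker_eq)).trans
    (QuotientAddGroup.quotientKerEquivOfSurjective _ (connectingHom_surjective hJ hR))

theorem stmt3_general (G ι : Type) [Group G] [Finite G]
    [MulAction G ι] [MulSemiringAction G (MvPolynomial ι ℤ)]
    (hX : ∀ (g : G) (i : ι), g • (X i : MvPolynomial ι ℤ) = X (g • i))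
    (J : Ideal (MvPolynomial ι ℤ))
    (hJ : ∀ (g : G), ∀ x ∈ J, g • x ∈ J)
    [MulSemiringAction G (MvPolynomial ι ℤ ⧸ J)]
    (hq : ∀ (g : G) (r : MvPolynomial ι ℤ),
      g • (Ideal.Quotient.mk J r) = Ideal.Quotient.mk J (g • r)) :
    Nonempty
      ((fixedSubring G (MvPolynomial ι ℤ ⧸ J) ⧸
          (resHom G (MvPolynomial ι ℤ) J hq).toAddMonoidHom.range) ≃+
        groupCohomology.H1 (idealRep G J hJ)) :=
  ⟨cokernelResHomEquivH1 J hJ hq (exists_eq_smul_sub_of_cocycle hX)⟩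

/-- Let `G` be a finite group acting on a finite nonempty type `ι`, acting
on `R = ℤ[xᵢ : i ∈ ι]` by ring automorphisms permuting the variables, and let `J ⊆ R` be
a `G`-stable ideal.  Then the cokernel of the restriction `R^G → (R/J)^G` of the
quotient map to invariant subrings is isomorphic, as an abelian group, to the first
group cohomology `H¹(G, J)` of `J` regarded as a `G`-module via the restricted action. -/
theorem stmt3 (G ι : Type) [Group G] [Finite G] [Finite ι] [Nonempty ι]
    [MulAction G ι] [MulSemiringAction G (MvPolynomial ι ℤ)]
    (hX : ∀ (g : G) (i : ι), g • (X i : MvPolynomial ι ℤ) = X (g • i))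
    (J : Ideal (MvPolynomial ι ℤ))
    (hJ : ∀ (g : G), ∀ x ∈ J, g • x ∈ J)
    [MulSemiringAction G (MvPolynomial ι ℤ ⧸ J)]
    (hq : ∀ (g : G) (r : MvPolynomial ι ℤ),
      g • (Ideal.Quotient.mk J r) = Ideal.Quotient.mk J (g • r)) :
    Nonempty
      ((fixedSubring G (MvPolynomial ι ℤ ⧸ J) ⧸
          (resHom G (MvPolynomial ι ℤ) J hq).toAddMonoidHom.range) ≃+
        groupCohomology.H1 (idealRep G J hJ)) :=
  stmt3_general G ι hX J hJ hq
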